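/- In Γ_Δ(D), for a vertex X and Y = 12⋯D, the distance d(X,Y) = D holds if and only if either the letter D does not occur in X, or D occurs in X at position j and some x_r with r < j is greater than D. -/

import Mathlib

/-- `l` is a vertex of the cycle prefix digraph `Γ_Δ(D)`: a sequence of `D`
distinct letters from the alphabet `{1, …, Δ+1}`. -/
def IsVtx (Δ D : ℕ) (l : List ℕ) : Prop :=
  l.length = D ∧ l.Nodup ∧ ∀ x ∈ l, 1 ≤ x ∧ x ≤ Δ + 1

/-- Adjacency in `Γ_Δ(D, -r)` (for `r = 0` this is `Γ_Δ(D)` itself): arcs are the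
rotations `R_k` for `r+2 ≤ k ≤ D` (0-indexed: move the letter at index `j`,
`r+1 ≤ j ≤ D-1`, to the front) and the shifts `S_y` for letters `y` not in the
sequence. -/
def adjR (Δ D r : ℕ) (X Y : List ℕ) : Prop :=
  IsVtx Δ D X ∧ IsVtx Δ D Y ∧
    ((∃ j, r + 1 ≤ j ∧ j < D ∧ Y = X.getD j 0 :: X.eraseIdx j) ∨
     (∃ y, y ∉ X ∧ Y = y :: X.dropLast))

/-- `w` is a directed walk of length `n` from `u` to `v` in the digraph with
adjacency relation `A`. -/
def IsWalk {V : Type*} (A : V → V → Prop) (u v : V) (n : ℕ) (w : ℕ → V) : Prop :=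
  w 0 = u ∧ w n = v ∧ ∀ i < n, A (w i) (w (i + 1))

/-- Directed distance: the least length of a directed walk from `u` to `v`. -/
noncomputable def cpDist {V : Type*} (A : V → V → Prop) (u v : V) : ℕ :=
  sInf {n | ∃ w, IsWalk A u v n w}

/-!
For a vertex `X` and `v ≤ D`, `d(X, 12⋯D) ≤ v` holds exactly when each of the letters
`v+1, …, D` is a left-to-right maximum of `X`, i.e. occurs in `X` preceded only by smaller
letters. Every arc `X → X'` puts some letter `y` in front of what is left of `X`; if `u, …, D`
are left-to-right maxima of `X'`, then `y ≤ u`, so `u+1, …, D` already were maxima of `X`.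
Conversely, if `v+1, …, D` are maxima of `X` but `v` is not, bringing `v` to the front (by a
rotation when `v ∈ X`, by a shift otherwise) makes `v, …, D` maxima, since a shift only drops
the last letter and a left-to-right maximum `w > v` cannot be last when the letter `v < w` is
missing. Hence `d(X, 12⋯D) = D` iff `D` is not a left-to-right maximum of `X`.
-/

section LRMax

variable {α : Type*} [LinearOrder α]

/-- `w` is a left-to-right maximum (a record) of `l`. -/
def IsLRMax (w : α) (l : List α) : Prop :=
  ∃ l₁ l₂, l = l₁ ++ w :: l₂ ∧ ∀ a ∈ l₁, a < w

theorem isLRMax_cons_self (w : α) (l : List α) : IsLRMax w (w :: l) :=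
  ⟨[], l, rfl, by simp⟩

namespace IsLRMax

variable {w a : α} {l : List α} {j : ℕ}

theorem mem (h : IsLRMax w l) : w ∈ l := by
  obtain ⟨l₁, l₂, rfl, -⟩ := h
  simp

theorem cons_of_lt (h : IsLRMax w l) (ha : a < w) : IsLRMax w (a :: l) := by
  obtain ⟨l₁, l₂, rfl, hl₁⟩ := h
  exact ⟨a :: l₁, l₂, rfl, by simpa [ha] using hl₁⟩

theorem le_of_cons (h : IsLRMax w (a :: l)) : a ≤ w := by
  obtain ⟨_ | ⟨b, l₁⟩, l₂, hl, hl₁⟩ := h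
  · exact (List.cons.inj hl).1.le
  · exact ((List.cons.inj hl).1 ▸ hl₁ b List.mem_cons_self).le

theorem of_cons (h : IsLRMax w (a :: l)) (ha : a ≠ w) : IsLRMax w l := by
  obtain ⟨_ | ⟨b, l₁⟩, l₂, hl, hl₁⟩ := h
  · exact absurd (List.cons.inj hl).1 ha
  · exact ⟨l₁, l₂, (List.cons.inj hl).2, fun x hx => hl₁ x (List.mem_cons_of_mem b hx)⟩

theorem of_dropLast (h : IsLRMax w l.dropLast) : IsLRMax w l := by
  obtain ⟨l₁, l₂, hl, hl₁⟩ := h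
  have hne : l ≠ [] := by
    rintro rfl
    simp at hl
  refine ⟨l₁, l₂ ++ [l.getLast hne], ?_, hl₁⟩
  conv_lhs => rw [← List.dropLast_append_getLast hne, hl]
  simp

theorem of_eraseIdx {d : α} (h : IsLRMax w (l.eraseIdx j)) (hj : l.getD j d < w) :
    IsLRMax w l := by
  induction l generalizing j with
  | nil => simpa using h
  | cons b l ih =>
    cases j with
    | zero => exact h.cons_of_lt hj
    | succ j =>
      by_cases hb : b = w
      · exact hb ▸ isLRMax_cons_self b l
      · have h' := (h : IsLRMax w (b :: l.eraseIdx j))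
        exact (ih (h'.of_cons hb) hj).cons_of_lt (lt_of_le_of_ne h'.le_of_cons hb)

theorem eraseIdx {d : α} (h : IsLRMax w l) (hj : l.getD j d ≠ w) : IsLRMax w (l.eraseIdx j) := by
  induction l generalizing j with
  | nil => exact h
  | cons b l ih =>
    cases j with
    | zero => exact h.of_cons hj
    | succ j =>
      by_cases hb : b = w
      · exact hb ▸ isLRMax_cons_self b _
      · exact (ih (h.of_cons hb) hj).cons_of_lt (lt_of_le_of_ne h.le_of_cons hb)

end IsLRMax

theorem pairwise_lt_of_forall_isLRMax {l : List α} (hl : l.Nodup)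
    (h : ∀ b ∈ l, IsLRMax b l) : l.Pairwise (· < ·) := by
  induction l with
  | nil => exact List.Pairwise.nil
  | cons a l ih =>
    rw [List.nodup_cons] at hl
    have hne : ∀ b ∈ l, a ≠ b := fun b hb hab => hl.1 (hab ▸ hb)
    refine List.Pairwise.cons (fun b hb => ?_) (ih hl.2 fun b hb => ?_)
    · exact lt_of_le_of_ne (h b (List.mem_cons_of_mem a hb)).le_of_cons (hne b hb)
    · exact (h b (List.mem_cons_of_mem a hb)).of_cons (hne b hb)

theorem not_isLRMax_iff {w : α} {l : List α} (hl : l.Nodup) {d : α} :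
    ¬IsLRMax w l ↔ w ∉ l ∨ ∃ j < l.length, l.getD j d = w ∧ ∃ r < j, w < l.getD r d := by
  constructor
  · intro h
    by_contra! hc
    obtain ⟨l₁, l₂, rfl⟩ := List.append_of_mem hc.1
    have hw : w ∉ l₁ := fun hw =>
      (List.nodup_cons.1 (List.nodup_middle.1 hl)).1 (List.mem_append_left l₂ hw)
    refine h ⟨l₁, l₂, rfl, fun a ha => ?_⟩
    obtain ⟨r, hr, rfl⟩ := List.getElem_of_mem ha
    have hle := hc.2 l₁.length (by simp) (by simp) r hr
    rw [List.getD_append _ _ _ _ hr, List.getD_eq_getElem _ _ hr] at hle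
    exact lt_of_le_of_ne hle fun h => hw (h ▸ List.getElem_mem hr)
  · rintro (hw | ⟨j, hj, hjw, r, hr, hrw⟩) h
    · exact hw h.mem
    · obtain ⟨l₁, l₂, rfl, hl₁⟩ := h
      have hjl : j = l₁.length := by
        rw [List.getD_eq_getElem _ _ hj] at hjw
        have hl' : (l₁ ++ w :: l₂)[l₁.length]'(by simp) = w := by simp
        exact (hl.getElem_inj_iff).1 (hjw.trans hl'.symm)
      subst hjl
      rw [List.getD_append _ _ _ _ hr, List.getD_eq_getElem _ _ hr] at hrw
      exact lt_asymm hrw (hl₁ _ (List.getElem_mem hr))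

end LRMax

theorem isLRMax_range' {s n w : ℕ} (hw : w ∈ Set.Ico s (s + n)) : IsLRMax w (List.range' s n) := by
  obtain ⟨hsw, hwn⟩ := hw
  refine ⟨List.range' s (w - s), List.range' (w + 1) (n - (w - s) - 1), ?_, fun a ha => ?_⟩
  · calc List.range' s n = List.range' s ((w - s) + (n - (w - s))) := by congr; omega
      _ = List.range' s (w - s) ++ List.range' (s + (w - s)) (n - (w - s)) :=
        List.range'_append_1.symm
      _ = _ := by
        rw [show s + (w - s) = w by omega, show n - (w - s) = n - (w - s) - 1 + 1 by omega,
          List.range'_succ, Nat.add_sub_cancel]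
  · rw [List.mem_range'_1] at ha
    omega

theorem IsLRMax.dropLast {u w : ℕ} {l : List ℕ} (h : IsLRMax w l) (hl : l.Nodup)
    (hpos : ∀ a ∈ l, 1 ≤ a) (hlen : w ≤ l.length) (hu : u ∉ l) (hu1 : 1 ≤ u) (huw : u < w) :
    IsLRMax w l.dropLast := by
  obtain ⟨l₁, _ | ⟨b, l₂⟩, rfl, hl₁⟩ := h
  · -- `w` is the last letter: the other `≥ w - 1` letters are distinct and lie in `[1, w) \ {u}`.
    exfalso
    have hsub : l₁.toFinset ⊆ (Finset.Ico 1 w).erase u := fun a ha => by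
      rw [List.mem_toFinset] at ha
      have := hpos a (by simp [ha])
      simp only [Finset.mem_erase, Finset.mem_Ico]
      exact ⟨fun h => hu (by simp [← h, ha]), this, hl₁ a ha⟩
    have hcard := Finset.card_le_card hsub
    rw [List.toFinset_card_of_nodup (List.nodup_append.1 hl).1, Finset.card_erase_of_mem
      (Finset.mem_Ico.2 ⟨hu1, huw⟩), Nat.card_Ico] at hcard
    simp only [List.length_append, List.length_cons, List.length_nil, zero_add] at hlen
    omega
  · exact ⟨l₁, (b :: l₂).dropLast, by simp, hl₁⟩

theorem IsWalk.refl {V : Type*} (A : V → V → Prop) (u : V) : IsWalk A u u 0 fun _ => u :=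
  ⟨rfl, rfl, fun _ h => absurd h (Nat.not_lt_zero _)⟩

theorem IsWalk.cons {V : Type*} {A : V → V → Prop} {u z v : V} {n : ℕ} {w : ℕ → V}
    (ha : A u z) (hw : IsWalk A z v n w) :
    IsWalk A u v (n + 1) fun | 0 => u | i + 1 => w i := by
  obtain ⟨h0, hn, hstep⟩ := hw
  refine ⟨rfl, hn, fun i hi => ?_⟩
  cases i with
  | zero => exact (h0 ▸ ha : A u (w 0))
  | succ i => exact hstep i (by omega)

theorem IsWalk.tail {V : Type*} {A : V → V → Prop} {u v : V} {n : ℕ} {w : ℕ → V}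
    (hw : IsWalk A u v (n + 1) w) : A u (w 1) ∧ IsWalk A (w 1) v n fun i => w (i + 1) := by
  obtain ⟨h0, hn, hstep⟩ := hw
  exact ⟨h0 ▸ hstep 0 n.succ_pos, rfl, hn, fun i hi => hstep (i + 1) (by omega)⟩

theorem cpDist_le_iff_exists_walk {V : Type*} {A : V → V → Prop} {u v : V} {m : ℕ}
    (h : ∃ n w, IsWalk A u v n w) :
    cpDist A u v ≤ m ↔ ∃ n ≤ m, ∃ w, IsWalk A u v n w :=
  ⟨fun hm => ⟨_, hm, Nat.sInf_mem h⟩, fun ⟨_, hn, hw⟩ => (Nat.sInf_le hw).trans hn⟩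

theorem IsVtx.perm {Δ D : ℕ} {l l' : List ℕ} (hl : IsVtx Δ D l) (h : l'.Perm l) : IsVtx Δ D l' :=
  ⟨h.length_eq.trans hl.1, h.nodup_iff.2 hl.2.1, fun x hx => hl.2.2 x (h.mem_iff.1 hx)⟩

theorem IsVtx.rotate {Δ D j : ℕ} {l : List ℕ} (hl : IsVtx Δ D l) (hj : j < D) :
    IsVtx Δ D (l.getD j 0 :: l.eraseIdx j) := by
  have hj' : j < l.length := hl.1 ▸ hj
  rw [List.getD_eq_getElem _ _ hj']
  exact hl.perm (((List.erase_getElem hj').symm.cons _).trans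
    (List.perm_cons_erase (List.getElem_mem hj')).symm)

theorem IsVtx.shift {Δ D y : ℕ} {l : List ℕ} (hl : IsVtx Δ D l) (hD : 1 ≤ D) (hy : y ∉ l)
    (hy1 : 1 ≤ y) (hyΔ : y ≤ Δ + 1) : IsVtx Δ D (y :: l.dropLast) := by
  obtain ⟨hlen, hnd, hbd⟩ := hl
  have hsub := List.dropLast_sublist l
  refine ⟨by simp only [List.length_cons, List.length_dropLast, hlen]; omega,
    (hsub.nodup hnd).cons fun h => hy (hsub.subset h), ?_⟩
  rintro x (_ | ⟨_, hx⟩)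
  · exact ⟨hy1, hyΔ⟩
  · exact hbd x (hsub.subset hx)

theorem isLRMax_of_adjR {Δ D r u : ℕ} {Z Z' : List ℕ} (h : adjR Δ D r Z Z')
    (hZ' : ∀ w ∈ Set.Icc u D, IsLRMax w Z') : ∀ w ∈ Set.Icc (u + 1) D, IsLRMax w Z := by
  rintro w ⟨huw, hwD⟩
  have hu := hZ' u ⟨le_rfl, by omega⟩
  have hw := hZ' w ⟨by omega, hwD⟩
  obtain ⟨-, -, ⟨j, -, -, rfl⟩ | ⟨y, -, rfl⟩⟩ := h
  · have hy := hu.le_of_cons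
    exact (hw.of_cons (by omega)).of_eraseIdx (d := 0) (by omega)
  · have hy := hu.le_of_cons
    exact (hw.of_cons (by omega)).of_dropLast

theorem isLRMax_of_isWalk {Δ D r n : ℕ} {X : List ℕ} {w : ℕ → List ℕ}
    (hw : IsWalk (adjR Δ D r) X (List.range' 1 D) n w) :
    ∀ v ∈ Set.Icc (n + 1) D, IsLRMax v X := by
  induction n generalizing X w with
  | zero =>
    obtain ⟨rfl, hn, -⟩ := hw
    rintro v ⟨hv, hvD⟩
    exact hn ▸ isLRMax_range' ⟨hv, by omega⟩
  | succ n ih =>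
    obtain ⟨hadj, htail⟩ := hw.tail
    exact isLRMax_of_adjR hadj (ih htail)

theorem exists_adjR_isLRMax {Δ D u : ℕ} (hΔ : D ≤ Δ + 1) {Z : List ℕ} (hZ : IsVtx Δ D Z)
    (hu : u ∈ Set.Icc 1 D) (hZu : ¬IsLRMax u Z) (hZw : ∀ w ∈ Set.Icc (u + 1) D, IsLRMax w Z) :
    ∃ Z', adjR Δ D 0 Z Z' ∧ ∀ w ∈ Set.Icc u D, IsLRMax w Z' := by
  obtain ⟨hu1, huD⟩ := hu
  have hcons : ∀ E, (∀ w ∈ Set.Icc (u + 1) D, IsLRMax w E) →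
      ∀ w ∈ Set.Icc u D, IsLRMax w (u :: E) := by
    rintro E hE w ⟨huw, hwD⟩
    rcases huw.eq_or_lt with rfl | huw
    · exact isLRMax_cons_self _ E
    · exact (hE w ⟨huw, hwD⟩).cons_of_lt huw
  by_cases huZ : u ∈ Z
  · obtain ⟨q, hq, rfl⟩ := List.getElem_of_mem huZ
    have hq0 : q ≠ 0 := by
      rintro rfl
      cases Z with
      | nil => simp at hq
      | cons a t => exact hZu (isLRMax_cons_self a t)
    have hgetD : Z.getD q 0 = Z[q] := List.getD_eq_getElem _ _ hq
    refine ⟨_, ⟨hZ, hZ.rotate (hZ.1 ▸ hq), .inl ⟨q, by omega, hZ.1 ▸ hq, rfl⟩⟩, ?_⟩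
    rw [hgetD]
    refine hcons _ fun w hw => (hZw w hw).eraseIdx (d := 0) ?_
    rw [hgetD]
    exact (hw.1.trans_lt' (Nat.lt_succ_self _)).ne
  · refine ⟨_, ⟨hZ, hZ.shift (by omega) huZ hu1 (by omega), .inr ⟨u, huZ, rfl⟩⟩, ?_⟩
    exact hcons _ fun w hw => (hZw w hw).dropLast hZ.2.1 (fun a ha => (hZ.2.2 a ha).1)
      (hZ.1 ▸ hw.2) huZ hu1 hw.1

theorem eq_range'_of_isLRMax {Δ D : ℕ} {Z : List ℕ} (hZ : IsVtx Δ D Z)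
    (h : ∀ w ∈ Set.Icc 1 D, IsLRMax w Z) : Z = List.range' 1 D := by
  have hmem : ∀ w, w ∈ List.range' 1 D ↔ w ∈ Set.Icc 1 D := fun w => by
    simp only [List.mem_range'_1, Set.mem_Icc]
    omega
  have hsub : List.range' 1 D ⊆ Z := fun w hw => (h w ((hmem w).1 hw)).mem
  have hperm : (List.range' 1 D).Perm Z :=
    ((List.nodup_range' (s := 1) (n := D)).subperm hsub).perm_of_length_le (by simp [hZ.1])
  refine (pairwise_lt_of_forall_isLRMax hZ.2.1 fun b hb => ?_).eq_of_mem_iff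
    (List.pairwise_lt_range' (s := 1)) fun a => hperm.mem_iff.symm
  exact h b ((hmem b).1 (hperm.mem_iff.2 hb))

theorem exists_walk_of_isLRMax {Δ D : ℕ} (hΔ : D ≤ Δ + 1) {v : ℕ} {Z : List ℕ}
    (hZ : IsVtx Δ D Z) (h : ∀ w ∈ Set.Icc (v + 1) D, IsLRMax w Z) :
    ∃ n ≤ v, ∃ w, IsWalk (adjR Δ D 0) Z (List.range' 1 D) n w := by
  induction v generalizing Z with
  | zero =>
    obtain rfl := eq_range'_of_isLRMax hZ h
    exact ⟨0, le_rfl, _, IsWalk.refl _ _⟩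
  | succ v ih =>
    by_cases hv : IsLRMax (v + 1) Z ∨ D < v + 1
    · have h' : ∀ w ∈ Set.Icc (v + 1) D, IsLRMax w Z := by
        rintro w ⟨hvw, hwD⟩
        rcases hvw.eq_or_lt with rfl | hvw
        · exact hv.resolve_right (by omega)
        · exact h w ⟨hvw, hwD⟩
      obtain ⟨n, hn, w, hw⟩ := ih hZ h'
      exact ⟨n, by omega, w, hw⟩
    · rw [not_or, not_lt] at hv
      obtain ⟨Z', hadj, hZ'⟩ := exists_adjR_isLRMax hΔ hZ ⟨by omega, hv.2⟩ hv.1 h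
      obtain ⟨n, hn, w, hw⟩ := ih hadj.2.1 hZ'
      exact ⟨n + 1, by omega, _, hw.cons hadj⟩

theorem cpDist_le_iff {Δ D v : ℕ} (hΔ : D ≤ Δ + 1) {X : List ℕ} (hX : IsVtx Δ D X) :
    cpDist (adjR Δ D 0) X (List.range' 1 D) ≤ v ↔ ∀ w ∈ Set.Icc (v + 1) D, IsLRMax w X := by
  obtain ⟨n, -, w, hw⟩ := exists_walk_of_isLRMax hΔ (v := D) hX fun w hw => by
    simp only [Set.mem_Icc] at hw; omega
  rw [cpDist_le_iff_exists_walk ⟨n, w, hw⟩]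
  refine ⟨?_, exists_walk_of_isLRMax hΔ hX⟩
  rintro ⟨n, hn, w, hw⟩ x ⟨hvx, hxD⟩
  exact isLRMax_of_isWalk hw x ⟨by omega, hxD⟩

/-- in `Γ_Δ(D)` with `Y = 12⋯D`, the distance `d(X, Y) = D` iff
either `D` does not occur in `X`, or `D` occurs at position `j` and some earlier
letter `x_r` (`r < j`) exceeds `D`. -/
theorem dist_eq_D_iff (Δ D : ℕ) (hD : 2 ≤ D) (hΔ : D ≤ Δ)
    (X : List ℕ) (hX : IsVtx Δ D X) :
    cpDist (adjR Δ D 0) X (List.range' 1 D) = D ↔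
      (D ∉ X ∨ ∃ j < D, X.getD j 0 = D ∧ ∃ r < j, D < X.getD r 0) := by
  have hΔ' : D ≤ Δ + 1 := by omega
  have hle : cpDist (adjR Δ D 0) X (List.range' 1 D) ≤ D :=
    (cpDist_le_iff hΔ' hX).2 fun w hw => by simp only [Set.mem_Icc] at hw; omega
  have hlt : cpDist (adjR Δ D 0) X (List.range' 1 D) ≤ D - 1 ↔ IsLRMax D X := by
    rw [cpDist_le_iff hΔ' hX]
    refine ⟨fun h => h D ⟨by omega, le_rfl⟩, fun h w hw => ?_⟩
    obtain rfl : w = D := by simp only [Set.mem_Icc] at hw; omega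
    exact h
  rw [← hX.1, ← not_isLRMax_iff hX.2.1, hX.1, ← hlt]
  omega
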